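/- arXiv:cond-mat/0112414 — 2 statements merged into one kernel-verified Lean document; each statement's English description precedes it below -/
import Mathlib

section
/- If v is a smooth solution of the critical NLS i∂ₜv + (1/2)Δv = λ|v|^{4/n}v on (-T,T) × ℝⁿ, then u(t,x) = (cos ωt)^{-n/2} e^{-i(ω/2)|x|² tan ωt} v(tan(ωt)/ω, x/cos ωt) is a smooth solution of i∂ₜu + (1/2)Δu = (ω²|x|²/2)u + λ|u|^{4/n}u on (-arctan(ωT)/ω, arctan(ωT)/ω) × ℝⁿ. -/
/-- The Laplacian of a complex-valued function on `ℝⁿ`, as a sum of second partial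
derivatives along the coordinate directions. -/
noncomputable def laplacianC {n : ℕ} (f : EuclideanSpace ℝ (Fin n) → ℂ)
    (x : EuclideanSpace ℝ (Fin n)) : ℂ :=
  ∑ i : Fin n, fderiv ℝ (fun y => fderiv ℝ f y (EuclideanSpace.single i 1)) x
    (EuclideanSpace.single i 1)

/-!
For fixed `t`, `u t` is a complex Gaussian `c * exp (b * ‖y‖²)` with `b = -i ω tan (ω t) / 2`
times the rescaled slice `y ↦ v s₀ (ρ • y)`, where `s₀ = tan (ω t) / ω` and `ρ = 1 / cos (ω t)`.
The product rule for the Laplacian expresses `Δ u` through `v`, `Dv · x` and `Δ v` at `(s₀, ρ x)`,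
and the chain rule along `s ↦ (tan (ω s) / ω, x / cos (ω s))` does the same for `∂ₜ u`.
In `i ∂ₜ u + Δ u / 2` the terms in `Dv · x` and in `n` cancel, the phase leaves
`(ω² ‖x‖² / 2) (ρ² - tan² (ω t)) u = (ω² ‖x‖² / 2) u`, and the rest is `ρ²` times the prefactor
times `i ∂ₜ v + Δ v / 2`. Because the power is critical, `|u|^(4/n) = ρ² |v|^(4/n)`, so the
equation for `v` closes the computation.
-/

open Real Topology
open Complex (I ofRealCLM ofRealCLM_apply)
open scoped Complex

theorem ContDiff.differentiable_fderiv_apply {E F : Type*} [NormedAddCommGroup E]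
    [NormedSpace ℝ E] [NormedAddCommGroup F] [NormedSpace ℝ F] {f : E → F}
    (hf : ContDiff ℝ 2 f) (e : E) : Differentiable ℝ fun y => fderiv ℝ f y e :=
  ((hf.fderiv_right (m := 1) (by norm_num)).differentiable one_ne_zero).clm_apply
    (differentiable_const e)

theorem Real.cos_pos_of_abs_lt_arctan {θ a : ℝ} (h : |θ| < arctan a) : 0 < cos θ := by
  obtain ⟨h₁, h₂⟩ := abs_lt.1 h
  have := arctan_lt_pi_div_two a
  exact cos_pos_of_mem_Ioo ⟨by linarith, by linarith⟩

theorem Real.abs_tan_lt_of_abs_lt_arctan {θ a : ℝ} (h : |θ| < arctan a) : |tan θ| < a := by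
  obtain ⟨h₁, h₂⟩ := abs_lt.1 h
  have hθ : arctan (tan θ) = θ :=
    arctan_tan (by linarith [arctan_lt_pi_div_two a]) (by linarith [arctan_lt_pi_div_two a])
  refine abs_lt.2 ⟨arctan_strictMono.lt_iff_lt.1 ?_, arctan_strictMono.lt_iff_lt.1 ?_⟩
  · rwa [hθ, arctan_neg]
  · rwa [hθ]

theorem cos_pos_and_abs_tan_div_lt_of_abs_lt_arctan_div {ω T t : ℝ} (hω : 0 < ω)
    (ht : |t| < arctan (ω * T) / ω) : 0 < cos (ω * t) ∧ |tan (ω * t) / ω| < T := by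
  have hωt : |ω * t| < arctan (ω * T) := by
    rwa [abs_mul, abs_of_pos hω, ← lt_div_iff₀' hω]
  refine ⟨cos_pos_of_abs_lt_arctan hωt, ?_⟩
  rw [abs_div, abs_of_pos hω, div_lt_iff₀' hω]
  exact abs_tan_lt_of_abs_lt_arctan hωt

theorem hasDerivAt_comp_of_differentiableAt_uncurry {F G : Type*} [NormedAddCommGroup F]
    [NormedSpace ℝ F] [NormedAddCommGroup G] [NormedSpace ℝ G] {f : ℝ → F → G}
    {σ : ℝ → ℝ} {γ : ℝ → F} {σ' : ℝ} {γ' : F} {t : ℝ}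
    (hf : DifferentiableAt ℝ (fun p : ℝ × F => f p.1 p.2) (σ t, γ t))
    (hσ : HasDerivAt σ σ' t) (hγ : HasDerivAt γ γ' t) :
    HasDerivAt (fun s => f (σ s) (γ s))
      (σ' • deriv (fun s => f s (γ t)) (σ t) + fderiv ℝ (f (σ t)) (γ t) γ') t := by
  set D := fderiv ℝ (fun p : ℝ × F => f p.1 p.2) (σ t, γ t)
  have hD : HasFDerivAt (fun p : ℝ × F => f p.1 p.2) D (σ t, γ t) := hf.hasFDerivAt
  have htime : HasDerivAt (fun s => f s (γ t)) (D (1, 0)) (σ t) :=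
    hD.comp_hasDerivAt (f := fun s => (s, γ t)) (σ t)
      ((hasDerivAt_id (σ t)).prodMk (hasDerivAt_const (σ t) (γ t)))
  have hspace : fderiv ℝ (f (σ t)) (γ t) = D.comp (ContinuousLinearMap.inr ℝ ℝ F) :=
    (hD.comp (γ t) (hasFDerivAt_prodMk_right (σ t) (γ t))).fderiv
  have hsplit : ((σ', γ') : ℝ × F) = σ' • ((1 : ℝ), (0 : F)) + ((0 : ℝ), γ') := by simp
  have hcurve : HasDerivAt (fun s => f (σ s) (γ s)) (D (σ', γ')) t :=
    hD.comp_hasDerivAt (f := fun s => (σ s, γ s)) t (hσ.prodMk hγ)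
  rw [htime.deriv, hspace]
  convert hcurve using 1
  rw [hsplit, map_add, map_smul]
  rfl

section

variable {n : ℕ}

local notation "E" => EuclideanSpace ℝ (Fin n)

theorem laplacianC_mul {f g : E → ℂ} (hf : ContDiff ℝ 2 f) (hg : ContDiff ℝ 2 g) (x : E) :
    laplacianC (fun y => f y * g y) x = laplacianC f x * g x
      + 2 * ∑ i, fderiv ℝ f x (EuclideanSpace.single i 1) * fderiv ℝ g x (EuclideanSpace.single i 1)
      + f x * laplacianC g x := by
  simp only [laplacianC, Finset.sum_mul, Finset.mul_sum, ← Finset.sum_add_distrib]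
  refine Finset.sum_congr rfl fun i _ => ?_
  set e : E := EuclideanSpace.single i 1
  have hf1 := hf.differentiable two_ne_zero
  have hg1 := hg.differentiable two_ne_zero
  have hfirst : (fun y => fderiv ℝ (fun y => f y * g y) y e)
      = fun y => fderiv ℝ f y e * g y + f y * fderiv ℝ g y e := by
    funext y
    rw [show (fun y => f y * g y) = f * g from rfl, fderiv_mul (hf1 y) (hg1 y)]
    simp only [add_apply, smul_apply, smul_eq_mul]
    ring
  have hsecond : HasFDerivAt (fun y => fderiv ℝ f y e * g y + f y * fderiv ℝ g y e) _ x :=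
    ((hf.differentiable_fderiv_apply e x).hasFDerivAt.mul (hg1 x).hasFDerivAt).add
      ((hf1 x).hasFDerivAt.mul (hg.differentiable_fderiv_apply e x).hasFDerivAt)
  rw [hfirst, hsecond.fderiv]
  simp only [add_apply, smul_apply, smul_eq_mul]
  ring

theorem hasFDerivAt_ofReal_norm_sq (y : E) :
    HasFDerivAt (fun y : E => (‖y‖ : ℂ) ^ 2) ((2 : ℂ) • ofRealCLM.comp (innerSL ℝ y)) y := by
  have h := ofRealCLM.hasFDerivAt.comp y (hasStrictFDerivAt_norm_sq y).hasFDerivAt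
  rw [show (fun y : E => (‖y‖ : ℂ) ^ 2) = ofRealCLM ∘ fun y => ‖y‖ ^ 2 from
    funext fun y => by simp]
  exact h.congr_fderiv (by ext h; simp)

theorem hasFDerivAt_gaussian (c b : ℂ) (y : E) :
    HasFDerivAt (fun y : E => c * cexp (b * (‖y‖ : ℂ) ^ 2))
      ((c * cexp (b * (‖y‖ : ℂ) ^ 2) * (2 * b)) • ofRealCLM.comp (innerSL ℝ y)) y := by
  refine ((((hasFDerivAt_ofReal_norm_sq y).const_mul b).cexp).const_mul c).congr_fderiv ?_
  ext h
  simp only [smul_apply, ContinuousLinearMap.comp_apply, coe_innerSL_apply, ofRealCLM_apply,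
    smul_eq_mul]
  ring

theorem contDiff_gaussian (c b : ℂ) {k : WithTop ℕ∞} :
    ContDiff ℝ k fun y : E => c * cexp (b * (‖y‖ : ℂ) ^ 2) := by
  have h : ContDiff ℝ k fun y : E => ((‖y‖ ^ 2 : ℝ) : ℂ) :=
    ofRealCLM.contDiff.comp (contDiff_norm_sq ℝ)
  push_cast at h
  fun_prop

theorem fderiv_gaussian_apply (c b : ℂ) (y h : E) :
    fderiv ℝ (fun y : E => c * cexp (b * (‖y‖ : ℂ) ^ 2)) y h
      = c * cexp (b * (‖y‖ : ℂ) ^ 2) * (2 * b * inner ℝ y h) := by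
  rw [(hasFDerivAt_gaussian c b y).fderiv]
  simp only [smul_apply, ContinuousLinearMap.comp_apply, coe_innerSL_apply, ofRealCLM_apply,
    smul_eq_mul]
  ring

theorem laplacianC_gaussian (c b : ℂ) (x : E) :
    laplacianC (fun y : E => c * cexp (b * (‖y‖ : ℂ) ^ 2)) x
      = c * cexp (b * (‖x‖ : ℂ) ^ 2) * (4 * b ^ 2 * (‖x‖ : ℂ) ^ 2 + 2 * n * b) := by
  classical
  have hterm : ∀ e : E,
      fderiv ℝ (fun y => fderiv ℝ (fun y : E => c * cexp (b * (‖y‖ : ℂ) ^ 2)) y e) x e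
      = c * cexp (b * (‖x‖ : ℂ) ^ 2) * (4 * b ^ 2 * (inner ℝ x e : ℂ) ^ 2 + 2 * b * ‖e‖ ^ 2) := by
    intro e
    simp_rw [fderiv_gaussian_apply]
    have hlin : HasFDerivAt (fun y : E => 2 * b * (inner ℝ y e : ℂ))
        ((2 * b) • ofRealCLM.comp (innerSL ℝ e)) x := by
      have h := (ofRealCLM.comp (innerSL ℝ e)).hasFDerivAt (x := x) |>.const_mul (2 * b)
      simpa only [ContinuousLinearMap.coe_comp, Function.comp_apply, innerSL_apply_apply,
        ofRealCLM_apply, real_inner_comm e] using h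
    have hprod : HasFDerivAt
        (fun y : E => c * cexp (b * (‖y‖ : ℂ) ^ 2) * (2 * b * (inner ℝ y e : ℂ))) _ x :=
      (hasFDerivAt_gaussian c b x).mul hlin
    rw [hprod.fderiv]
    simp only [add_apply, smul_apply, ContinuousLinearMap.comp_apply, coe_innerSL_apply,
      inner_self_eq_norm_sq_to_K, ringHom_apply, ofRealCLM_apply, Complex.ofReal_pow, smul_eq_mul]
    ring
  have hbasis : ∀ i, EuclideanSpace.single i 1 = EuclideanSpace.basisFun (Fin n) ℝ i :=
    fun i => (EuclideanSpace.basisFun_apply ..).symm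
  simp only [laplacianC, hterm, hbasis, ← Finset.mul_sum, Finset.sum_add_distrib]
  have hsum : ∑ i, (inner ℝ x (EuclideanSpace.basisFun (Fin n) ℝ i) : ℂ) ^ 2 = (‖x‖ : ℂ) ^ 2 := by
    exact_mod_cast (EuclideanSpace.basisFun (Fin n) ℝ).sum_sq_inner_left x
  simp only [hsum, OrthonormalBasis.norm_eq_one, Complex.ofReal_one, one_pow, Finset.sum_const,
    Finset.card_univ, Fintype.card_fin, nsmul_eq_mul, mul_one]
  ring

theorem fderiv_comp_smul_apply (w : E → ℂ) (ρ : ℝ) (y h : E) :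
    fderiv ℝ (fun y => w (ρ • y)) y h = ρ * fderiv ℝ w (ρ • y) h := by
  rw [fderiv_comp_smul, smul_apply, Complex.real_smul]

theorem laplacianC_comp_smul (w : E → ℂ) (ρ : ℝ) (x : E) :
    laplacianC (fun y => w (ρ • y)) x = ρ ^ 2 * laplacianC w (ρ • x) := by
  simp only [laplacianC, Finset.mul_sum]
  refine Finset.sum_congr rfl fun i _ => ?_
  set e : E := EuclideanSpace.single i 1
  have hfirst : (fun y => fderiv ℝ (fun y => w (ρ • y)) y e)
      = ρ • fun y => fderiv ℝ w (ρ • y) e := by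
    funext y
    rw [fderiv_comp_smul_apply, Pi.smul_apply, Complex.real_smul]
  rw [hfirst, fderiv_const_smul_field, Pi.smul_apply, smul_apply, Complex.real_smul,
    fderiv_comp_smul_apply (fun z => fderiv ℝ w z e)]
  ring

theorem sum_inner_single_mul_apply (L : E →L[ℝ] ℂ) (x : E) :
    ∑ i, (inner ℝ x (EuclideanSpace.single i 1) : ℂ) * L (EuclideanSpace.single i 1) = L x := by
  classical
  conv_rhs => rw [← (EuclideanSpace.basisFun (Fin n) ℝ).sum_repr' x]
  simp [map_sum, real_inner_comm, Complex.real_smul]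

theorem laplacianC_gaussian_mul_comp_smul (c b : ℂ) (ρ : ℝ) {w : E → ℂ} (hw : ContDiff ℝ 2 w)
    (x : E) :
    laplacianC (fun y => c * cexp (b * (‖y‖ : ℂ) ^ 2) * w (ρ • y)) x
      = c * cexp (b * (‖x‖ : ℂ) ^ 2) * ((4 * b ^ 2 * (‖x‖ : ℂ) ^ 2 + 2 * n * b) * w (ρ • x)
          + 4 * b * ρ * fderiv ℝ w (ρ • x) x + ρ ^ 2 * laplacianC w (ρ • x)) := by
  rw [laplacianC_mul (contDiff_gaussian c b) (g := fun y => w (ρ • y))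
      (hw.comp (contDiff_const_smul ρ)),
    laplacianC_gaussian, laplacianC_comp_smul]
  simp_rw [fderiv_gaussian_apply, fderiv_comp_smul_apply]
  have hcross : ∑ i, c * cexp (b * (‖x‖ : ℂ) ^ 2) * (2 * b * inner ℝ x (EuclideanSpace.single i 1))
        * (ρ * fderiv ℝ w (ρ • x) (EuclideanSpace.single i 1))
      = c * cexp (b * (‖x‖ : ℂ) ^ 2) * (2 * b * ρ) * fderiv ℝ w (ρ • x) x := by
    rw [← sum_inner_single_mul_apply, Finset.mul_sum]
    exact Finset.sum_congr rfl fun i _ => by ring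
  rw [hcross]
  ring

noncomputable def lensFactor (ω t : ℝ) (x : E) : ℂ :=
  ((cos (ω * t) ^ (-(n : ℝ) / 2) : ℝ) : ℂ) * cexp (-I * (ω / 2) * (‖x‖ : ℂ) ^ 2 * (tan (ω * t) : ℂ))

theorem hasDerivAt_lensFactor {ω t : ℝ} (hc : cos (ω * t) ≠ 0) (x : E) :
    HasDerivAt (fun s => lensFactor ω s x)
      (lensFactor ω t x
        * (n / 2 * ω * tan (ω * t) - I * ω ^ 2 / 2 * ‖x‖ ^ 2 / cos (ω * t) ^ 2)) t := by
  have hθ : HasDerivAt (fun s => ω * s) ω t := by simpa using (hasDerivAt_id t).const_mul ω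
  have hpow := (((hasDerivAt_cos (ω * t)).comp t hθ).rpow_const (p := -(n : ℝ) / 2)
    (Or.inl hc)).ofReal_comp
  have hphase := (((hasDerivAt_tan hc).comp t hθ).ofReal_comp.const_mul
    (-I * (ω / 2) * (‖x‖ : ℂ) ^ 2)).cexp
  refine (hpow.mul hphase).congr_deriv ?_
  simp only [Function.comp_apply, rpow_sub_one hc, tan_eq_sin_div_cos, lensFactor]
  push_cast
  field_simp
  ring

theorem lensFactor_eq_gaussian (ω t : ℝ) (y : E) :
    lensFactor ω t y = ((cos (ω * t) ^ (-(n : ℝ) / 2) : ℝ) : ℂ)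
      * cexp (-I * (ω / 2) * tan (ω * t) * (‖y‖ : ℂ) ^ 2) := by
  rw [lensFactor]; ring_nf

theorem laplacianC_lensFactor_mul (ω t ρ : ℝ) {w : E → ℂ} (hw : ContDiff ℝ 2 w) (x : E) :
    laplacianC (fun y => lensFactor ω t y * w (ρ • y)) x
      = lensFactor ω t x * ((4 * (-I * (ω / 2) * tan (ω * t)) ^ 2 * (‖x‖ : ℂ) ^ 2
          + 2 * n * (-I * (ω / 2) * tan (ω * t))) * w (ρ • x)
        + 4 * (-I * (ω / 2) * tan (ω * t)) * ρ * fderiv ℝ w (ρ • x) x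
        + ρ ^ 2 * laplacianC w (ρ • x)) := by
  simp only [lensFactor_eq_gaussian]
  exact laplacianC_gaussian_mul_comp_smul _ _ ρ hw x

theorem hasDerivAt_lens_reparam {v : ℝ → E → ℂ} {ω t : ℝ} (hω : ω ≠ 0) (hc : cos (ω * t) ≠ 0)
    (x : E) (hv : DifferentiableAt ℝ (fun p : ℝ × E => v p.1 p.2)
      (tan (ω * t) / ω, (cos (ω * t))⁻¹ • x)) :
    HasDerivAt (fun s => v (tan (ω * s) / ω) ((cos (ω * s))⁻¹ • x))
      (deriv (fun s => v s ((cos (ω * t))⁻¹ • x)) (tan (ω * t) / ω) / cos (ω * t) ^ 2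
        + ω * tan (ω * t) / cos (ω * t)
          * fderiv ℝ (v (tan (ω * t) / ω)) ((cos (ω * t))⁻¹ • x) x) t := by
  have hθ : HasDerivAt (fun s => ω * s) ω t := by simpa using (hasDerivAt_id t).const_mul ω
  have htime := ((hasDerivAt_tan hc).comp t hθ).div_const ω
  have hspace := (((hasDerivAt_cos (ω * t)).comp t hθ).inv hc).smul_const x
  have htime' : 1 / cos (ω * t) ^ 2 * ω / ω = 1 / cos (ω * t) ^ 2 := by field_simp
  have hspace' : -(-sin (ω * t) * ω) / cos (ω * t) ^ 2 = ω * tan (ω * t) / cos (ω * t) := by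
    rw [tan_eq_sin_div_cos]; field_simp
  refine (hasDerivAt_comp_of_differentiableAt_uncurry hv htime hspace).congr_deriv ?_
  simp only [Function.comp_apply, Pi.inv_apply, htime', hspace', map_smul, Complex.real_smul]
  push_cast
  ring

theorem norm_lensFactor_mul_rpow {ω t : ℝ} (hc : 0 < cos (ω * t)) (hn : n ≠ 0) (x : E) (z : ℂ) :
    ‖lensFactor ω t x * z‖ ^ ((4 : ℝ) / n) = (cos (ω * t))⁻¹ ^ 2 * ‖z‖ ^ ((4 : ℝ) / n) := by
  have hphase : ‖cexp (-I * (ω / 2) * (‖x‖ : ℂ) ^ 2 * (tan (ω * t) : ℂ))‖ = 1 := by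
    generalize tan (ω * t) = τ
    rw [show -I * (ω / 2) * (‖x‖ : ℂ) ^ 2 * (τ : ℂ) = ((-(ω / 2) * ‖x‖ ^ 2 * τ : ℝ) : ℂ) * I by
      push_cast; ring]
    exact Complex.norm_exp_ofReal_mul_I _
  have hexp : (-(n : ℝ) / 2) * (4 / n) = -(2 : ℕ) := by field_simp; norm_num
  rw [lensFactor, norm_mul, norm_mul, hphase, mul_one, Complex.norm_real, Real.norm_eq_abs,
    abs_of_pos (rpow_pos_of_pos hc _), mul_rpow (rpow_pos_of_pos hc _).le (norm_nonneg z),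
    ← rpow_mul hc.le, hexp, rpow_neg hc.le, rpow_natCast, inv_pow]

end

theorem lens_transform_of_critical_NLS_general
    (n : ℕ) (hn : 1 ≤ n) (ω lam T : ℝ) (hω : 0 < ω)
    (v u : ℝ → EuclideanSpace ℝ (Fin n) → ℂ)
    (hvreg : ContDiffOn ℝ 2 (fun p : ℝ × EuclideanSpace ℝ (Fin n) => v p.1 p.2)
      (Set.Ioo (-T) T ×ˢ Set.univ))
    (hv : ∀ t x, |t| < T →
      Complex.I * deriv (fun s => v s x) t + (1 / 2) * laplacianC (v t) x
        = (lam : ℂ) * ((‖v t x‖ ^ ((4 : ℝ) / n) : ℝ) : ℂ) * v t x)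
    (hu : ∀ t x, u t x = ((Real.cos (ω * t) ^ (-(n : ℝ) / 2) : ℝ) : ℂ)
        * Complex.exp (-Complex.I * (ω / 2) * (‖x‖ : ℂ) ^ 2 * (Real.tan (ω * t) : ℂ))
        * v (Real.tan (ω * t) / ω) ((Real.cos (ω * t))⁻¹ • x)) :
    ∀ t x, |t| < Real.arctan (ω * T) / ω →
      Complex.I * deriv (fun s => u s x) t + (1 / 2) * laplacianC (u t) x
        = ((ω : ℂ) ^ 2 * (‖x‖ : ℂ) ^ 2 / 2) * u t x
          + (lam : ℂ) * ((‖u t x‖ ^ ((4 : ℝ) / n) : ℝ) : ℂ) * u t x := by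
  intro t x ht
  obtain ⟨hc, hs⟩ := cos_pos_and_abs_tan_div_lt_of_abs_lt_arctan_div hω ht
  have hΩ : Set.Ioo (-T) T ×ˢ Set.univ ∈ 𝓝 (tan (ω * t) / ω, (cos (ω * t))⁻¹ • x) :=
    prod_mem_nhds (Ioo_mem_nhds (abs_lt.1 hs).1 (abs_lt.1 hs).2) Filter.univ_mem
  have hslice : ContDiff ℝ 2 (v (tan (ω * t) / ω)) :=
    hvreg.comp_contDiff (contDiff_const.prodMk contDiff_id) fun _ => ⟨abs_lt.1 hs, trivial⟩
  have hdiff := (hvreg.contDiffAt hΩ).differentiableAt two_ne_zero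
  obtain rfl : u = fun s y => lensFactor ω s y * v (tan (ω * s) / ω) ((cos (ω * s))⁻¹ • y) :=
    funext₂ hu
  have hderiv : HasDerivAt
      (fun s => lensFactor ω s x * v (tan (ω * s) / ω) ((cos (ω * s))⁻¹ • x)) _ t :=
    (hasDerivAt_lensFactor hc.ne' x).mul (hasDerivAt_lens_reparam hω.ne' hc.ne' x hdiff)
  beta_reduce
  rw [hderiv.deriv, laplacianC_lensFactor_mul _ _ _ hslice, norm_lensFactor_mul_rpow hc (by omega)]
  have hpyth : ((cos (ω * t) : ℂ)⁻¹) ^ 2 = 1 + (tan (ω * t) : ℂ) ^ 2 := by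
    exact_mod_cast (inv_pow (cos (ω * t)) 2).trans (by rw [← inv_one_add_tan_sq hc.ne', inv_inv])
  have hvt := hv (tan (ω * t) / ω) ((cos (ω * t))⁻¹ • x) hs
  set w := v (tan (ω * t) / ω) ((cos (ω * t))⁻¹ • x)
  simp only [Complex.ofReal_mul, Complex.ofReal_pow, Complex.ofReal_inv]
  linear_combination (lensFactor ω t x * (cos (ω * t) : ℂ)⁻¹ ^ 2) * hvt
    - (lensFactor ω t x * w * ω ^ 2 * ‖x‖ ^ 2 / 2
        * ((cos (ω * t) : ℂ)⁻¹ ^ 2 - (tan (ω * t) : ℂ) ^ 2)) * Complex.I_sq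
    + (lensFactor ω t x * w * ω ^ 2 * ‖x‖ ^ 2 / 2) * hpyth

/-- The lens transform maps solutions of the critical NLS to solutions of the
critical NLS with isotropic harmonic potential. -/
theorem lens_transform_of_critical_NLS
    (n : ℕ) (hn : 1 ≤ n) (ω lam T : ℝ) (hω : 0 < ω) (hT : 0 < T)
    (v u : ℝ → EuclideanSpace ℝ (Fin n) → ℂ)
    (hvreg : ContDiffOn ℝ 2 (fun p : ℝ × EuclideanSpace ℝ (Fin n) => v p.1 p.2)
      (Set.Ioo (-T) T ×ˢ Set.univ))
    (hv : ∀ t x, |t| < T →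
      Complex.I * deriv (fun s => v s x) t + (1 / 2) * laplacianC (v t) x
        = (lam : ℂ) * ((‖v t x‖ ^ ((4 : ℝ) / n) : ℝ) : ℂ) * v t x)
    (hu : ∀ t x, u t x = ((Real.cos (ω * t) ^ (-(n : ℝ) / 2) : ℝ) : ℂ)
        * Complex.exp (-Complex.I * (ω / 2) * (‖x‖ : ℂ) ^ 2 * (Real.tan (ω * t) : ℂ))
        * v (Real.tan (ω * t) / ω) ((Real.cos (ω * t))⁻¹ • x)) :
    ∀ t x, |t| < Real.arctan (ω * T) / ω →
      Complex.I * deriv (fun s => u s x) t + (1 / 2) * laplacianC (u t) x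
        = ((ω : ℂ) ^ 2 * (‖x‖ : ℂ) ^ 2 / 2) * u t x
          + (lam : ℂ) * ((‖u t x‖ ^ ((4 : ℝ) / n) : ℝ) : ℂ) * u t x :=
  lens_transform_of_critical_NLS_general n hn ω lam T hω v u hvreg hv hu
end

section
/- Merle's explicit blowing-up solution solves the critical NLS: if Q is a smooth solution of −(1/2)ΔQ + Q = −λ|Q|^{4/n}Q on ℝⁿ, then v(t,x) = (δ/(T−t))^{n/2} e^{iθ − i|x−x₁|²/(2(T−t)) + iδ²/(T−t)} Q(δ((x−x₁)/(T−t) − x₀)) satisfies i∂ₜv + (1/2)Δv = λ|v|^{4/n}v for t < T. -/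
/-- The Laplacian of a real-valued function on `ℝⁿ`. -/
noncomputable def laplacianR {n : ℕ} (f : EuclideanSpace ℝ (Fin n) → ℝ)
    (x : EuclideanSpace ℝ (Fin n)) : ℝ :=
  ∑ i : Fin n, fderiv ℝ (fun y => fderiv ℝ f y (EuclideanSpace.single i 1)) x
    (EuclideanSpace.single i 1)

set_option maxHeartbeats 2000000 in
/-- Merle's explicit blowing-up solution solves the critical NLS. -/
theorem explicit_blowup_solution_solves_critical_NLS
    (n : ℕ) (hn : 1 ≤ n) (lam : ℝ) (hlam : lam < 0)
    (θ δ T : ℝ) (hδ : 0 < δ) (hT : 0 < T)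
    (x₀ x₁ : EuclideanSpace ℝ (Fin n))
    (Q : EuclideanSpace ℝ (Fin n) → ℝ)
    (hQreg : ContDiff ℝ (⊤ : ℕ∞) Q) (hQpos : ∀ x, 0 < Q x)
    (hQ : ∀ x, -(1 / 2) * laplacianR Q x + Q x = -lam * Q x ^ ((1 : ℝ) + 4 / n))
    (v : ℝ → EuclideanSpace ℝ (Fin n) → ℂ)
    (hv : ∀ t x, v t x = (((δ / (T - t)) ^ ((n : ℝ) / 2) : ℝ) : ℂ)
        * Complex.exp (Complex.I * (θ : ℂ)
            - Complex.I * ((‖x - x₁‖ : ℝ) : ℂ) ^ 2 / (2 * ((T : ℂ) - (t : ℂ)))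
            + Complex.I * (δ : ℂ) ^ 2 / ((T : ℂ) - (t : ℂ)))
        * ((Q (δ • ((T - t)⁻¹ • (x - x₁) - x₀)) : ℝ) : ℂ)) :
    ∀ t x, t < T →
      Complex.I * deriv (fun s => v s x) t + (1 / 2) * laplacianC (v t) x
        = (lam : ℂ) * ((‖v t x‖ ^ ((4 : ℝ) / n) : ℝ) : ℂ) * v t x := by
  intro t x ht
  classical
  have hn0 : (n : ℝ) ≠ 0 := Nat.cast_ne_zero.2 (by omega)
  have hsp : (0:ℝ) < T - t := sub_pos.2 ht
  have hs0 : (T - t) ≠ 0 := ne_of_gt hsp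
  have hsc0 : ((T - t : ℝ):ℂ) ≠ 0 := Complex.ofReal_ne_zero.2 hs0
  have hsc : ((T:ℂ) - (t:ℂ)) = ((T - t : ℝ):ℂ) := by push_cast; ring
  have hδs : (0:ℝ) < δ / (T - t) := div_pos hδ hsp
  have hQd : Differentiable ℝ Q := hQreg.differentiable (by simp)
  have hQfd : ContDiff ℝ (⊤ : ℕ∞) (fderiv ℝ Q) := hQreg.fderiv_right (by simp)
  -- notation
  set A : ℝ := (δ / (T - t)) ^ ((n:ℝ)/2) with hAdef
  have hApos : 0 < A := Real.rpow_pos_of_pos hδs _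
  set c₁ : ℂ := Complex.I * θ + Complex.I * (δ:ℂ)^2 / ((T - t : ℝ):ℂ) with hc₁
  set c₂ : ℂ := Complex.I / (2 * ((T - t : ℝ):ℂ)) with hc₂
  set NN : EuclideanSpace ℝ (Fin n) → ℝ := fun y => ∑ j, (y j - x₁ j)^2 with hNNdef
  set L : EuclideanSpace ℝ (Fin n) → EuclideanSpace ℝ (Fin n) :=
    fun y => δ • ((T - t)⁻¹ • (y - x₁) - x₀) with hLdef
  set k : ℝ := δ * (T - t)⁻¹ with hkdef
  -- NN y = ‖y - x₁‖²
  have hnn : ∀ y : EuclideanSpace ℝ (Fin n), NN y = ‖y - x₁‖^2 := by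
    intro y
    rw [hNNdef, EuclideanSpace.norm_eq, Real.sq_sqrt (by positivity)]
    simp [PiLp.sub_apply]
  have hnn' : ∀ y : EuclideanSpace ℝ (Fin n), ((NN y : ℝ):ℂ) = ((‖y - x₁‖ : ℝ):ℂ)^2 := by
    intro y; rw [hnn y]; push_cast; ring
  -- exponent rewriting
  have hexpo : ∀ y : EuclideanSpace ℝ (Fin n),
      Complex.I * (θ : ℂ) - Complex.I * ((‖y - x₁‖ : ℝ) : ℂ) ^ 2 / (2 * ((T : ℂ) - (t : ℂ)))
        + Complex.I * (δ : ℂ) ^ 2 / ((T : ℂ) - (t : ℂ))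
      = c₁ - c₂ * ((NN y : ℝ):ℂ) := by
    intro y
    rw [hsc, hnn' y, hc₁, hc₂]
    ring
  have hveq : v t = fun y => ((A:ℝ):ℂ) * Complex.exp (c₁ - c₂ * ((NN y : ℝ):ℂ))
      * ((Q (L y) : ℝ):ℂ) := by
    funext y
    rw [hv t y, hexpo y]
  -- derivative machinery
  have hNNd : ∀ y : EuclideanSpace ℝ (Fin n), HasFDerivAt NN
      (∑ j, ((2:ℝ)*(y j - x₁ j)) • (EuclideanSpace.proj j : EuclideanSpace ℝ (Fin n) →L[ℝ] ℝ)) y := by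
    intro y
    apply HasFDerivAt.fun_sum
    intro j _
    have h := ((EuclideanSpace.proj j (𝕜 := ℝ)).hasFDerivAt (x := y)).sub_const (x₁ j)
    have h2 := h.fun_mul h
    convert h2 using 1
    · ext z; simp [sq]
    · ext u; simp; ring
    · rw [two_mul, add_smul]; rfl
  have hLd : ∀ y : EuclideanSpace ℝ (Fin n), HasFDerivAt L
      (δ • ((T - t)⁻¹ • ContinuousLinearMap.id ℝ (EuclideanSpace ℝ (Fin n)))) y :=
    fun y => ((((hasFDerivAt_id y).sub_const x₁).const_smul (T - t)⁻¹).sub_const x₀).const_smul δ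
  have hNNc : ∀ y : EuclideanSpace ℝ (Fin n),
      HasFDerivAt (fun y => ((NN y : ℝ):ℂ))
      (Complex.ofRealCLM.comp (∑ j, ((2:ℝ)*(y j - x₁ j)) • (EuclideanSpace.proj j : EuclideanSpace ℝ (Fin n) →L[ℝ] ℝ))) y :=
    fun y => Complex.ofRealCLM.hasFDerivAt.comp y (hNNd y)
  have hQc : ∀ y : EuclideanSpace ℝ (Fin n),
      HasFDerivAt (fun y => ((Q (L y) : ℝ):ℂ))
      (Complex.ofRealCLM.comp ((fderiv ℝ Q (L y)).comp
        (δ • ((T - t)⁻¹ • ContinuousLinearMap.id ℝ (EuclideanSpace ℝ (Fin n)))))) y :=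
    fun y => Complex.ofRealCLM.hasFDerivAt.comp y (((hQd (L y)).hasFDerivAt).comp y (hLd y))
  -- first spatial derivative
  have hfirst : ∀ (y : EuclideanSpace ℝ (Fin n)) (i : Fin n),
      fderiv ℝ (v t) y (EuclideanSpace.single i 1)
      = ((A:ℝ):ℂ) * Complex.exp (c₁ - c₂ * ((NN y : ℝ):ℂ)) *
        (-(c₂ * ((2*(y i - x₁ i) : ℝ):ℂ)) * ((Q (L y) : ℝ):ℂ)
         + ((k:ℝ):ℂ) * ((fderiv ℝ Q (L y) (EuclideanSpace.single i 1) : ℝ):ℂ)) := by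
    intro y i
    rw [hveq]
    have hall := ((((hNNc y).const_mul c₂).const_sub c₁).cexp.const_mul ((A:ℝ):ℂ)).fun_mul (hQc y)
    rw [hall.fderiv]
    simp [ContinuousLinearMap.sum_apply, EuclideanSpace.single_apply, Finset.mul_sum, hkdef]
    push_cast
    ring
  -- second spatial derivative
  have hsecond : ∀ i : Fin n,
      fderiv ℝ (fun y => fderiv ℝ (v t) y (EuclideanSpace.single i 1)) x (EuclideanSpace.single i 1)
      = ((A:ℝ):ℂ) * Complex.exp (c₁ - c₂ * ((NN x : ℝ):ℂ)) *
        ((4*c₂^2*((x i - x₁ i : ℝ):ℂ)^2 - 2*c₂) * ((Q (L x) : ℝ):ℂ)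
         + (-(4*c₂*((k:ℝ):ℂ))) * ((x i - x₁ i : ℝ):ℂ)
              * ((fderiv ℝ Q (L x) (EuclideanSpace.single i 1) : ℝ):ℂ)
         + ((k:ℝ):ℂ)^2 * ((fderiv ℝ (fun z => fderiv ℝ Q z (EuclideanSpace.single i 1)) (L x)
              (EuclideanSpace.single i 1) : ℝ):ℂ)) := by
    intro i
    have hfun : (fun y => fderiv ℝ (v t) y (EuclideanSpace.single i 1))
        = fun y => ((A:ℝ):ℂ) * Complex.exp (c₁ - c₂ * ((NN y : ℝ):ℂ)) *
          (-(c₂ * ((2*(y i - x₁ i) : ℝ):ℂ)) * ((Q (L y) : ℝ):ℂ)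
           + ((k:ℝ):ℂ) * ((fderiv ℝ Q (L y) (EuclideanSpace.single i 1) : ℝ):ℂ)) :=
      funext fun y => hfirst y i
    rw [hfun]
    have hDdiff : Differentiable ℝ (fun z => fderiv ℝ Q z (EuclideanSpace.single i 1)) :=
      (hQfd.differentiable (by simp)).clm_apply (differentiable_const _)
    have hfd2 : HasFDerivAt (fun z => fderiv ℝ Q z (EuclideanSpace.single i 1))
        (fderiv ℝ (fun z => fderiv ℝ Q z (EuclideanSpace.single i 1)) (L x)) (L x) :=
      (hDdiff (L x)).hasFDerivAt
    have hDi : HasFDerivAt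
        (fun y => ((fderiv ℝ Q (L y) (EuclideanSpace.single i 1) : ℝ):ℂ))
        (Complex.ofRealCLM.comp
          ((fderiv ℝ (fun z => fderiv ℝ Q z (EuclideanSpace.single i 1)) (L x)).comp
            (δ • ((T - t)⁻¹ • ContinuousLinearMap.id ℝ (EuclideanSpace ℝ (Fin n)))))) x :=
      Complex.ofRealCLM.hasFDerivAt.comp x (hfd2.comp x (hLd x))
    have hcoord : HasFDerivAt
        (fun y : EuclideanSpace ℝ (Fin n) => ((2*(y i - x₁ i) : ℝ):ℂ))
        (Complex.ofRealCLM.comp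
          ((2:ℝ) • (EuclideanSpace.proj i : EuclideanSpace ℝ (Fin n) →L[ℝ] ℝ))) x :=
      Complex.ofRealCLM.hasFDerivAt.comp x
        (((EuclideanSpace.proj i (𝕜 := ℝ)).hasFDerivAt (x := x)).sub_const (x₁ i)|>.const_mul 2)
    have hB := (((hcoord.const_mul c₂).fun_neg.fun_mul (hQc x)).fun_add (hDi.const_mul ((k:ℝ):ℂ)))
    have hall := ((((hNNc x).const_mul c₂).const_sub c₁).cexp.const_mul ((A:ℝ):ℂ)).fun_mul hB
    rw [hall.fderiv]
    simp [ContinuousLinearMap.sum_apply, EuclideanSpace.single_apply, Finset.mul_sum, hkdef]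
    push_cast
    ring
  -- Laplacian
  set S : ℝ := ∑ i, (x i - x₁ i) * fderiv ℝ Q (L x) (EuclideanSpace.single i 1) with hSdef
  have hlap : laplacianC (v t) x
      = ((A:ℝ):ℂ) * Complex.exp (c₁ - c₂ * ((NN x : ℝ):ℂ)) *
        ((4*c₂^2*((NN x : ℝ):ℂ) - 2*c₂*(n:ℂ)) * ((Q (L x) : ℝ):ℂ)
         + (-(4*c₂*((k:ℝ):ℂ))) * ((S:ℝ):ℂ)
         + ((k:ℝ):ℂ)^2 * ((laplacianR Q (L x) : ℝ):ℂ)) := by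
    rw [laplacianC, Finset.sum_congr rfl (fun i _ => hsecond i)]
    simp only [hSdef, laplacianR, hNNdef]
    push_cast
    have hcard : (n:ℂ) = ∑ _i : Fin n, (1:ℂ) := by simp
    rw [hcard]
    simp only [Finset.mul_sum, Finset.sum_mul, mul_sub, sub_mul, mul_add, add_mul, neg_mul,
      mul_neg]
    simp only [← Finset.sum_add_distrib, ← Finset.sum_sub_distrib, ← Finset.sum_neg_distrib]
    exact Finset.sum_congr rfl fun i _ => by ring
  -- time derivative
  have hvt : (fun t' => v t' x) = fun t' => (((δ / (T - t')) ^ ((n : ℝ) / 2) : ℝ) : ℂ)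
      * Complex.exp (Complex.I * (θ : ℂ)
          - Complex.I * ((‖x - x₁‖ : ℝ) : ℂ) ^ 2 / (2 * ((T : ℂ) - (t' : ℂ)))
          + Complex.I * (δ : ℂ) ^ 2 / ((T : ℂ) - (t' : ℂ)))
      * ((Q (δ • ((T - t')⁻¹ • (x - x₁) - x₀)) : ℝ) : ℂ) := funext fun t' => hv t' x
  have hTt : HasDerivAt (fun t' : ℝ => T - t') (-1) t := by
    simpa using (hasDerivAt_id t).const_sub T
  have hA1 : HasDerivAt (fun t' : ℝ => (δ / (T - t')) ^ ((n:ℝ)/2))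
      ((0 * (T - t) - δ * -1)/(T-t)^2 * ((n:ℝ)/2) * (δ/(T-t)) ^ ((n:ℝ)/2 - 1)) t :=
    ((hasDerivAt_const t δ).div hTt hs0).rpow_const (Or.inl (ne_of_gt hδs))
  have hA1c := Complex.ofRealCLM.hasFDerivAt.comp_hasDerivAt t hA1
  have htc : HasDerivAt (fun t' : ℝ => ((t' : ℝ):ℂ)) 1 t := by
    simpa using (hasDerivAt_id t).ofReal_comp
  have hTtc : HasDerivAt (fun t' : ℝ => (T:ℂ) - (t':ℂ)) (-1) t := by
    simpa using htc.const_sub (T:ℂ)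
  have hden2 : (2 * ((T:ℂ) - (t:ℂ))) ≠ 0 := by
    rw [hsc]; exact mul_ne_zero two_ne_zero hsc0
  have hden1 : ((T:ℂ) - (t:ℂ)) ≠ 0 := by rw [hsc]; exact hsc0
  have hterm2 := (hasDerivAt_const t (Complex.I * ((‖x - x₁‖:ℝ):ℂ)^2)).fun_div
      (hTtc.const_mul 2) hden2
  have hterm3 := (hasDerivAt_const t (Complex.I * (δ:ℂ)^2)).fun_div hTtc hden1
  have hψ := (((hasDerivAt_const t (Complex.I * (θ:ℂ))).fun_sub hterm2).fun_add hterm3).cexp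
  have hγ : HasDerivAt (fun t' : ℝ => δ • ((T - t')⁻¹ • (x - x₁) - x₀))
      (δ • ((-(-1)/(T-t)^2) • (x - x₁))) t :=
    (((hTt.inv hs0).smul_const (x - x₁)).sub_const x₀).const_smul δ
  have hQt := (hQd (δ • ((T - t)⁻¹ • (x - x₁) - x₀))).hasFDerivAt.comp_hasDerivAt t hγ
  have hQtc := Complex.ofRealCLM.hasFDerivAt.comp_hasDerivAt t hQt
  have hSlin : fderiv ℝ Q (L x) (x - x₁) = S := by
    have hb' : (x - x₁) = ∑ i, (x i - x₁ i) • EuclideanSpace.single i (1:ℝ) := by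
      have h := (EuclideanSpace.basisFun (Fin n) ℝ).sum_repr (x - x₁)
      simp only [EuclideanSpace.basisFun_apply, EuclideanSpace.basisFun_repr,
        PiLp.sub_apply] at h
      exact h.symm
    rw [hSdef]
    conv_lhs => rw [hb']
    rw [map_sum]
    exact Finset.sum_congr rfl fun i _ => by rw [map_smul]; simp [smul_eq_mul]
  have hSlin' : fderiv ℝ Q (δ • ((T - t)⁻¹ • (x - x₁) - x₀)) (x - x₁) = S := hSlin
  clear_value A c₁ c₂ NN L k S
  have hdt : deriv (fun t' => v t' x) t
      = ((A:ℝ):ℂ) * Complex.exp (c₁ - c₂ * ((NN x : ℝ):ℂ)) *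
        ( (n:ℂ)/(2*((T-t:ℝ):ℂ)) * ((Q (L x):ℝ):ℂ)
          + (Complex.I*((δ:ℝ):ℂ)^2 - Complex.I*((NN x:ℝ):ℂ)/2) / ((T-t:ℝ):ℂ)^2 * ((Q (L x):ℝ):ℂ)
          + ((δ:ℝ):ℂ)/((T-t:ℝ):ℂ)^2 * ((S:ℝ):ℂ) ) := by
    rw [hvt]
    refine Eq.trans (((hA1c.fun_mul hψ).fun_mul hQtc).deriv) ?_
    rw [hexpo x]
    simp only [Complex.ofRealCLM_apply, Function.comp_apply, map_smul, smul_eq_mul, hSlin']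
    rw [show (0 * (T - t) - δ * -1)/(T-t)^2 * ((n:ℝ)/2) * (δ/(T-t)) ^ ((n:ℝ)/2 - 1)
        = (n:ℝ)/(2*(T-t)) * A from by
      rw [Real.rpow_sub_one (ne_of_gt hδs), ← hAdef]
      field_simp
      ring]
    rw [show δ * (- -1/(T-t)^2 * S) = δ/(T-t)^2 * S from by ring]
    rw [hsc, ← hnn' x]
    rw [show (0 - (0 * (2 * ((T-t:ℝ):ℂ)) - Complex.I * ((NN x:ℝ):ℂ) * (2 * -1)) / (2 * ((T-t:ℝ):ℂ)) ^ 2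
          + (0 * ((T-t:ℝ):ℂ) - Complex.I * ((δ:ℝ):ℂ) ^ 2 * -1) / ((T-t:ℝ):ℂ) ^ 2)
        = (Complex.I*((δ:ℝ):ℂ)^2 - Complex.I*((NN x:ℝ):ℂ)/2) / ((T-t:ℝ):ℂ)^2 from by
      field_simp
      ring]
    simp only [hLdef]
    rw [← hAdef]
    push_cast
    ring
  -- norm of v
  have hq : 0 < Q (L x) := hQpos _
  have hvx : v t x = ((A:ℝ):ℂ) * Complex.exp (c₁ - c₂ * ((NN x:ℝ):ℂ)) * ((Q (L x):ℝ):ℂ) :=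
    congrFun hveq x
  have hExn : Complex.exp (c₁ - c₂ * ((NN x:ℝ):ℂ))
      = Complex.exp (((θ + δ^2/(T-t) - NN x/(2*(T-t)) : ℝ):ℂ) * Complex.I) := by
    congr 1
    rw [hc₁, hc₂]
    push_cast
    field_simp
  have hnorm : ‖v t x‖ = A * Q (L x) := by
    rw [hvx, norm_mul, norm_mul, hExn]
    simp only [Complex.norm_real, Real.norm_eq_abs, Complex.norm_exp_ofReal_mul_I]
    rw [abs_of_pos hApos, abs_of_pos hq]
    ring
  have hnorm4 : ‖v t x‖ ^ ((4:ℝ)/n) = (δ/(T-t))^2 * Q (L x) ^ ((4:ℝ)/n) := by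
    rw [hnorm, Real.mul_rpow hApos.le hq.le]
    congr 1
    rw [hAdef, ← Real.rpow_natCast (δ/(T-t)) 2, ← Real.rpow_mul hδs.le]
    congr 1
    push_cast
    field_simp
    ring
  have hQrel : Q (L x) ^ ((1:ℝ) + 4/n) = Q (L x) * Q (L x) ^ ((4:ℝ)/n) := by
    rw [Real.rpow_add hq, Real.rpow_one]
  have hlapQ : laplacianR Q (L x) = 2 * Q (L x) + 2 * lam * Q (L x) ^ ((1:ℝ)+4/n) := by
    have h := hQ (L x); linarith
  rw [hdt, hlap, hnorm4, hvx, hlapQ, hQrel, hc₂, hkdef]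
  generalize hσ : T - t = σ
  have hσ0' : σ ≠ 0 := by rw [← hσ]; exact hs0
  have hσ0 : (σ:ℂ) ≠ 0 := Complex.ofReal_ne_zero.2 hσ0'
  push_cast
  ring_nf
  simp only [Complex.I_sq]
  ring_nf
end
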